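/- arXiv:2604.13526 — 2 statements merged into one kernel-verified Lean document; each statement's English description precedes it below -/
import Mathlib

section
/- (Lower-level equivalence) Let v, w ∈ A_i (i.e., all edges incident to v and to w lie in E_{<i}), and let E', F' ⊆ E_{<i}. Suppose: (a) for every u ∈ W_i ∪ {S} and x ∈ W_i, u reaches x in (V,E') iff u reaches x in (V,F'); (b) for every u ∈ W_i ∪ {S}, u reaches v in (V,E') iff u reaches w in (V,F'). Then for every H ⊆ E_{≥i}, S reaches v in (V, E'∪H) if and only if S reaches w in (V, F'∪H). -/
open scoped Classical
open Finset

noncomputable section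

/-- `inc src tgt e x` : edge `e` is incident to vertex `x`. -/
def inc {V : Type*} (src tgt : ℕ → V) (e : ℕ) (x : V) : Prop := src e = x ∨ tgt e = x

/-- Reachability in the subgraph with edge set `A`. -/
def Reach {V : Type*} (src tgt : ℕ → V) (A : Finset ℕ) (x y : V) : Prop :=
  Relation.ReflTransGen (fun a b => ∃ e ∈ A, src e = a ∧ tgt e = b) x y

/-- `v` is reachable from some vertex of `S` in the subgraph with edge set `A`. -/
def SReach {V : Type*} (src tgt : ℕ → V) (A : Finset ℕ) (S : Finset V) (v : V) : Prop :=
  ∃ s ∈ S, Reach src tgt A s v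

/-- Probability that exactly the edges in `X` (among `e_0,…,e_{m-1}`) are present. -/
def prW (p : ℕ → ℝ) (m : ℕ) (X : Finset ℕ) : ℝ :=
  (∏ e ∈ X, p e) * ∏ e ∈ Finset.range m \ X, (1 - p e)

/-- Probability that `v` is reachable from the seed set `S`. -/
def probReach {V : Type*} (src tgt : ℕ → V) (p : ℕ → ℝ) (m : ℕ) (S : Finset V) (v : V) : ℝ :=
  ∑ X ∈ (Finset.range m).powerset, if SReach src tgt X S v then prW p m X else 0

/-- Conditional probability of `event` given that all edges in `A` are present and
all edges in `B` are absent. -/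
def condP (p : ℕ → ℝ) (m : ℕ) (A B : Finset ℕ) (event : Finset ℕ → Prop) : ℝ :=
  (∑ X ∈ (Finset.range m).powerset,
      if A ⊆ X ∧ X ∩ B = ∅ ∧ event X then prW p m X else 0) /
  (∑ X ∈ (Finset.range m).powerset, if A ⊆ X ∧ X ∩ B = ∅ then prW p m X else 0)

/-- The frontier `W_i`: vertices incident both to an edge of `E_{<i}` and to an edge of
`E_{≥ i}` (as a set). -/
def frontSet {V : Type*} (src tgt : ℕ → V) (m i : ℕ) : Set V :=
  {x | (∃ e ∈ Finset.range i, inc src tgt e x) ∧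
       ∃ e ∈ Finset.range m \ Finset.range i, inc src tgt e x}

/-- The frontier `W_i` as a finset. -/
def front {V : Type*} [Fintype V] (src tgt : ℕ → V) (m i : ℕ) : Finset V :=
  Finset.univ.filter fun x =>
    (∃ e ∈ Finset.range i, inc src tgt e x) ∧
    ∃ e ∈ Finset.range m \ Finset.range i, inc src tgt e x

/-- The shared transversal configuration `Ψ_i(A)`: the set of frontier vertices reachable
from `S`, together with the reachability relation among unreached frontier vertices. -/
def Psi {V : Type*} [Fintype V] (src tgt : ℕ → V) (m : ℕ) (S : Finset V) (i : ℕ)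
    (A : Finset ℕ) : Finset V × Finset (V × V) :=
  ((front src tgt m i).filter fun x => SReach src tgt A S x,
   ((front src tgt m i) ×ˢ (front src tgt m i)).filter fun q =>
     ¬ SReach src tgt A S q.1 ∧ Reach src tgt A q.1 q.2)

/-- The transversal configuration `Φ_i^v(A)`: the sets `W_i^{S⇝}`, `W_i^{⇝v}`, the
reachability matrix on the remaining rows/columns (with extra column `v`), and the
entry `Φ_{S,v}`. -/
def Phi {V : Type*} [Fintype V] (src tgt : ℕ → V) (m : ℕ) (S : Finset V) (i : ℕ) (v : V)
    (A : Finset ℕ) : Finset V × Finset V × Finset (V × V) × Prop :=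
  ((front src tgt m i).filter fun x => SReach src tgt A S x,
   (front src tgt m i).filter fun x => Reach src tgt A x v,
   (((front src tgt m i) ∪ {v}) ×ˢ ((front src tgt m i) ∪ {v})).filter fun q =>
     (q.1 ∈ front src tgt m i ∧ ¬ SReach src tgt A S q.1) ∧
     (q.2 = v ∨ (q.2 ∈ front src tgt m i ∧ ¬ Reach src tgt A q.2 v)) ∧
     Reach src tgt A q.1 q.2,
   SReach src tgt A S v)

/-- Probability that the shared transversal configuration `Ψ` appears at level `i`. -/
def PrPsi {V : Type*} [Fintype V] (src tgt : ℕ → V) (p : ℕ → ℝ) (m : ℕ) (S : Finset V)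
    (i : ℕ) (Ψ : Finset V × Finset (V × V)) : ℝ :=
  ∑ A ∈ (Finset.range i).powerset,
    if Psi src tgt m S i A = Ψ then
      (∏ e ∈ A, p e) * ∏ e ∈ Finset.range i \ A, (1 - p e)
    else 0

/-- `IsWalk src tgt A x y es`: `es` is a directed walk from `x` to `y` using edges in `A`. -/
def IsWalk {V : Type*} (src tgt : ℕ → V) (A : Finset ℕ) : V → V → List ℕ → Prop
  | x, y, [] => x = y
  | x, y, e :: es => e ∈ A ∧ src e = x ∧ IsWalk src tgt A (tgt e) y es

/-!
Call a vertex touched if it is incident to an edge of `H ⊆ E_{≥i}`; a touched vertex with an edge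
in `E' ⊆ E_{<i}` lies on the frontier `W_i`. Cut a walk from `S` in `E' ∪ H` after its last
`H`-edge: what follows is an `E'`-walk out of a touched vertex. Inducting along the walk, every
touched vertex reached from `S` in `E' ∪ H` is reached in `F' ∪ H`, since the `E'`-segment leading
to it is trivial or joins `S` or a frontier vertex to a frontier vertex, where (a) trades `E'` for
`F'`. As `v` is untouched, its final `E'`-segment starts at `S` or at a frontier vertex, and (b)
trades it for an `F'`-walk to `w`.
-/

section LowerLevel

variable {V : Type*} {src tgt : ℕ → V}

def touches (src tgt : ℕ → V) (H : Finset ℕ) (x : V) : Prop := ∃ e ∈ H, inc src tgt e x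

lemma Reach.mono {A B : Finset ℕ} (hAB : A ⊆ B) {x y : V} (h : Reach src tgt A x y) :
    Reach src tgt B x y :=
  Relation.ReflTransGen.mono (fun _ _ ⟨e, he, hs, ht⟩ => ⟨e, hAB he, hs, ht⟩) _ _ h

lemma Reach.single {A : Finset ℕ} {e : ℕ} (he : e ∈ A) : Reach src tgt A (src e) (tgt e) :=
  Relation.ReflTransGen.single ⟨e, he, rfl, rfl⟩

lemma Reach.eq_or_exists_src {A : Finset ℕ} {x y : V} (h : Reach src tgt A x y) :
    x = y ∨ ∃ e ∈ A, src e = x := by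
  rcases h.cases_head with hxy | ⟨_, ⟨e, he, hs, _⟩, _⟩
  · exact .inl hxy
  · exact .inr ⟨e, he, hs⟩

lemma Reach.eq_or_exists_tgt {A : Finset ℕ} {x y : V} (h : Reach src tgt A x y) :
    x = y ∨ ∃ e ∈ A, tgt e = y := by
  rcases h.cases_tail with hyx | ⟨_, _, ⟨e, he, _, ht⟩⟩
  · exact .inl hyx.symm
  · exact .inr ⟨e, he, ht⟩

lemma SReach.mono {A B : Finset ℕ} (hAB : A ⊆ B) {S : Finset V} {x : V}
    (h : SReach src tgt A S x) : SReach src tgt B S x :=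
  let ⟨s, hs, hsx⟩ := h
  ⟨s, hs, hsx.mono hAB⟩

lemma SReach.trans {A : Finset ℕ} {S : Finset V} {x y : V} (h : SReach src tgt A S x)
    (hxy : Reach src tgt A x y) : SReach src tgt A S y :=
  let ⟨s, hs, hsx⟩ := h
  ⟨s, hs, hsx.trans hxy⟩

variable {m i : ℕ} {A H : Finset ℕ}

lemma mem_frontSet_of_touches (hA : A ⊆ range i) (hH : H ⊆ range m \ range i) {x : V}
    (hx : touches src tgt H x) {e : ℕ} (he : e ∈ A) (hex : inc src tgt e x) :
    x ∈ frontSet src tgt m i :=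
  let ⟨f, hf, hfx⟩ := hx
  ⟨⟨e, hA he, hex⟩, ⟨f, hH hf, hfx⟩⟩

lemma not_touches_of_inc_imp_mem (hH : H ⊆ range m \ range i) {x : V}
    (hx : ∀ e ∈ range m, inc src tgt e x → e ∈ range i) : ¬ touches src tgt H x := by
  rintro ⟨e, he, hex⟩
  obtain ⟨hem, hei⟩ := mem_sdiff.mp (hH he)
  exact hei (hx e hem hex)

variable {S : Finset V} {E' F' : Finset ℕ}
  (hE' : E' ⊆ range i) (hH : H ⊆ range m \ range i)
  (ha1 : ∀ u ∈ frontSet src tgt m i, ∀ x ∈ frontSet src tgt m i,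
    Reach src tgt E' u x → Reach src tgt F' u x)
  (ha2 : ∀ x ∈ frontSet src tgt m i, SReach src tgt E' S x → SReach src tgt F' S x)
include hE' hH ha1 ha2

lemma sReach_union_of_touches {b : V} (hb : touches src tgt H b)
    (h : SReach src tgt E' S b ∨
      ∃ y, touches src tgt H y ∧ SReach src tgt (F' ∪ H) S y ∧ Reach src tgt E' y b) :
    SReach src tgt (F' ∪ H) S b := by
  rcases h with ⟨s, hs, hsb⟩ | ⟨y, hy, hSy, hyb⟩
  · rcases hsb.eq_or_exists_tgt with rfl | ⟨e, he, hte⟩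
    · exact ⟨s, hs, .refl⟩
    · have hbW := mem_frontSet_of_touches hE' hH hb he (.inr hte)
      exact (ha2 b hbW ⟨s, hs, hsb⟩).mono subset_union_left
  · rcases hyb.eq_or_exists_src with rfl | ⟨e, he, hse⟩
    · exact hSy
    have hyW := mem_frontSet_of_touches hE' hH hy he (.inl hse)
    rcases hyb.eq_or_exists_tgt with rfl | ⟨f, hf, htf⟩
    · exact hSy
    have hbW := mem_frontSet_of_touches hE' hH hb hf (.inr htf)
    exact hSy.trans ((ha1 y hyW b hbW hyb).mono subset_union_left)

lemma sReach_union_cases {b : V} (h : SReach src tgt (E' ∪ H) S b) :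
    SReach src tgt E' S b ∨
      ∃ y, touches src tgt H y ∧ SReach src tgt (F' ∪ H) S y ∧ Reach src tgt E' y b := by
  obtain ⟨s, hs, hsb⟩ := h
  induction hsb with
  | refl => exact .inl ⟨s, hs, .refl⟩
  | tail _ hstep ih =>
    obtain ⟨e, he, rfl, rfl⟩ := hstep
    rcases mem_union.mp he with heE | heH
    · rcases ih with hS | ⟨y, hy, hSy, hyb⟩
      · exact .inl (hS.trans (Reach.single heE))
      · exact .inr ⟨y, hy, hSy, hyb.trans (Reach.single heE)⟩
    · have hSe := sReach_union_of_touches hE' hH ha1 ha2 ⟨e, heH, .inl rfl⟩ ih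
      exact .inr ⟨tgt e, ⟨e, heH, .inr rfl⟩, hSe.trans (Reach.single (mem_union_right _ heH)), .refl⟩

lemma sReach_union_of_not_touches {v w : V} (hv : ¬ touches src tgt H v)
    (hb1 : ∀ u ∈ frontSet src tgt m i, Reach src tgt E' u v → Reach src tgt F' u w)
    (hb2 : SReach src tgt E' S v → SReach src tgt F' S w)
    (h : SReach src tgt (E' ∪ H) S v) : SReach src tgt (F' ∪ H) S w := by
  rcases sReach_union_cases hE' hH ha1 ha2 h with hSv | ⟨y, hy, hSy, hyv⟩
  · exact (hb2 hSv).mono subset_union_left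
  · rcases hyv.eq_or_exists_src with rfl | ⟨e, he, hse⟩
    · exact absurd hy hv
    have hyW := mem_frontSet_of_touches hE' hH hy he (.inl hse)
    exact hSy.trans ((hb1 y hyW hyv).mono subset_union_left)

end LowerLevel

theorem stmt4_general {V : Type*} (src tgt : ℕ → V) (m i : ℕ)
    (S : Finset V) (v w : V) (E' F' : Finset ℕ)
    (hE' : E' ⊆ Finset.range i) (hF' : F' ⊆ Finset.range i)
    (hvA : ∀ e ∈ Finset.range m, inc src tgt e v → e ∈ Finset.range i)
    (hwA : ∀ e ∈ Finset.range m, inc src tgt e w → e ∈ Finset.range i)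
    (ha1 : ∀ u ∈ frontSet src tgt m i, ∀ x ∈ frontSet src tgt m i,
      (Reach src tgt E' u x ↔ Reach src tgt F' u x))
    (ha2 : ∀ x ∈ frontSet src tgt m i,
      (SReach src tgt E' S x ↔ SReach src tgt F' S x))
    (hb1 : ∀ u ∈ frontSet src tgt m i,
      (Reach src tgt E' u v ↔ Reach src tgt F' u w))
    (hb2 : SReach src tgt E' S v ↔ SReach src tgt F' S w) :
    ∀ H ⊆ Finset.range m \ Finset.range i,
      (SReach src tgt (E' ∪ H) S v ↔ SReach src tgt (F' ∪ H) S w) := by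
  intro H hH
  constructor
  · exact sReach_union_of_not_touches hE' hH (fun u hu x hx => (ha1 u hu x hx).mp)
      (fun x hx => (ha2 x hx).mp) (not_touches_of_inc_imp_mem hH hvA)
      (fun u hu => (hb1 u hu).mp) hb2.mp
  · exact sReach_union_of_not_touches hF' hH (fun u hu x hx => (ha1 u hu x hx).mpr)
      (fun x hx => (ha2 x hx).mpr) (not_touches_of_inc_imp_mem hH hwA)
      (fun u hu => (hb1 u hu).mpr) hb2.mpr

/-- Lower-level equivalence: if all edges incident to `v` and `w` lie in `E_{<i}` and
`E', F' ⊆ E_{<i}` induce identical reachability among the frontier (and from `S`), with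
the column of `v` under `E'` matching the column of `w` under `F'`, then for every
`H ⊆ E_{≥i}`, `S ⇝ v` in `(V, E' ∪ H)` iff `S ⇝ w` in `(V, F' ∪ H)`. -/
theorem stmt4 {V : Type*} (src tgt : ℕ → V) (m i : ℕ) (him : i ≤ m)
    (S : Finset V) (v w : V) (E' F' : Finset ℕ)
    (hE' : E' ⊆ Finset.range i) (hF' : F' ⊆ Finset.range i)
    (hvA : ∀ e ∈ Finset.range m, inc src tgt e v → e ∈ Finset.range i)
    (hwA : ∀ e ∈ Finset.range m, inc src tgt e w → e ∈ Finset.range i)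
    (ha1 : ∀ u ∈ frontSet src tgt m i, ∀ x ∈ frontSet src tgt m i,
      (Reach src tgt E' u x ↔ Reach src tgt F' u x))
    (ha2 : ∀ x ∈ frontSet src tgt m i,
      (SReach src tgt E' S x ↔ SReach src tgt F' S x))
    (hb1 : ∀ u ∈ frontSet src tgt m i,
      (Reach src tgt E' u v ↔ Reach src tgt F' u w))
    (hb2 : SReach src tgt E' S v ↔ SReach src tgt F' S w) :
    ∀ H ⊆ Finset.range m \ Finset.range i,
      (SReach src tgt (E' ∪ H) S v ↔ SReach src tgt (F' ∪ H) S w) :=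
  stmt4_general src tgt m i S v w E' F' hE' hF' hvA hwA ha1 ha2 hb1 hb2

end
end

section
/- (Conditional probability decomposition over component) Let Ψ = Ψ_i(E') with the SCC C of G_i(Ψ) containing a vertex u ∈ W_{i+1}. Then Pr[S⇝C | Ψ] = p_{e_i} · Pr[S⇝hi(C) | hi(Ψ)] + (1−p_{e_i}) · Pr[S⇝lo(C) | lo(Ψ)], where hi(C) (resp. lo(C)) is the SCC of G_{i+1}(hi(Ψ)) (resp. G_{i+1}(lo(Ψ))) containing u, interpreted as probability 1 when u becomes reachable from S after adding e_i. -/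
open scoped Classical
open Finset

noncomputable section

/-!
Every vertex of the component `C` reaches `u` using edges already present, so once the edges
of `E_{<i}` are fixed, `S` reaches `C` exactly when it reaches `u`. Conditioning on the status
of `e_i` then splits the conditional probability, since the normalising weight of the
conditioning event `A ⊆ X, X ∩ B = ∅` is the product `∏_{A} p · ∏_{B} (1 - p)`.
-/

lemma reach_mono {V : Type*} {src tgt : ℕ → V} {A X : Finset ℕ} (h : A ⊆ X) {x y : V}
    (hr : Reach src tgt A x y) : Reach src tgt X x y :=
  Relation.ReflTransGen.mono (fun _ _ ⟨e, he, hs, ht⟩ => ⟨e, h he, hs, ht⟩) _ _ hr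

section condP

variable (p : ℕ → ℝ) (m : ℕ)

/-- Expanding `∏ (f + g)` over subsets, with `f` vanishing on `B` and `g` vanishing on `A`,
leaves exactly the edge sets `X ⊇ A` avoiding `B`. -/
lemma sum_prW_of_subset_of_inter_eq_empty {A B : Finset ℕ} (hA : A ⊆ range m)
    (hB : B ⊆ range m) (hAB : Disjoint A B) :
    (∑ X ∈ (range m).powerset, if A ⊆ X ∧ X ∩ B = ∅ then prW p m X else 0)
      = (∏ e ∈ A, p e) * ∏ e ∈ B, (1 - p e) := by
  set f : ℕ → ℝ := fun e => if e ∈ B then 0 else p e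
  set g : ℕ → ℝ := fun e => if e ∈ A then 0 else 1 - p e
  have hterm : ∀ X ∈ (range m).powerset, (if A ⊆ X ∧ X ∩ B = ∅ then prW p m X else 0)
      = (∏ e ∈ X, f e) * ∏ e ∈ range m \ X, g e := by
    intro X _
    by_cases hAX : A ⊆ X
    · by_cases hXB : X ∩ B = ∅
      · rw [if_pos ⟨hAX, hXB⟩, prW]
        congr 1
        · refine prod_congr rfl fun e he => (if_neg fun heB => ?_).symm
          exact (not_nonempty_iff_eq_empty.mpr hXB) ⟨e, mem_inter.mpr ⟨he, heB⟩⟩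
        · exact prod_congr rfl fun e he =>
            (if_neg fun heA => (mem_sdiff.mp he).2 (hAX heA)).symm
      · obtain ⟨b, hb⟩ := nonempty_iff_ne_empty.mpr hXB
        rw [if_neg fun h => hXB h.2,
          prod_eq_zero (mem_inter.mp hb).1 (show f b = 0 from if_pos (mem_inter.mp hb).2), zero_mul]
    · obtain ⟨a, haA, haX⟩ := not_subset.mp hAX
      rw [if_neg fun h => hAX h.1,
        prod_eq_zero (mem_sdiff.mpr ⟨hA haA, haX⟩) (show g a = 0 from if_pos haA), mul_zero]
  have hfg : ∀ e ∈ range m, f e + g e = if e ∈ A then p e else if e ∈ B then 1 - p e else 1 := by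
    intro e _
    by_cases heA : e ∈ A
    · simp [f, g, heA, disjoint_left.mp hAB heA]
    · by_cases heB : e ∈ B <;> simp [f, g, heA, heB]
  rw [sum_congr rfl hterm, ← prod_add, prod_congr rfl hfg,
    ← prod_subset (union_subset hA hB) fun e _ he => by simp_all, prod_union hAB]
  congr 1
  · exact prod_congr rfl fun e he => if_pos he
  · exact prod_congr rfl fun e he => by simp [he, disjoint_right.mp hAB he]

lemma sum_ite_prW_split (i : ℕ) (A B : Finset ℕ) (event : Finset ℕ → Prop) :
    (∑ X ∈ (range m).powerset, if A ⊆ X ∧ X ∩ B = ∅ ∧ event X then prW p m X else 0)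
      = (∑ X ∈ (range m).powerset,
          if insert i A ⊆ X ∧ X ∩ B = ∅ ∧ event X then prW p m X else 0)
        + ∑ X ∈ (range m).powerset,
          if A ⊆ X ∧ X ∩ insert i B = ∅ ∧ event X then prW p m X else 0 := by
  rw [← sum_add_distrib]
  refine sum_congr rfl fun X _ => ?_
  by_cases hiX : i ∈ X
  · simp [insert_subset_iff, inter_insert_of_mem, hiX]
  · simp [insert_subset_iff, inter_insert_of_notMem, hiX]

lemma condP_congr {A B : Finset ℕ} {event event' : Finset ℕ → Prop}
    (h : ∀ X, A ⊆ X → (event X ↔ event' X)) :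
    condP p m A B event = condP p m A B event' := by
  unfold condP
  congr 1
  exact sum_congr rfl fun X _ => if_congr
    ⟨fun ⟨hA, hB, hX⟩ => ⟨hA, hB, (h X hA).mp hX⟩, fun ⟨hA, hB, hX⟩ => ⟨hA, hB, (h X hA).mpr hX⟩⟩
    rfl rfl

lemma condP_eq_add_condP_insert {i : ℕ} {A B : Finset ℕ} (event : Finset ℕ → Prop)
    (him : i ∈ range m) (hiA : i ∉ A) (hiB : i ∉ B) (hA : A ⊆ range m) (hB : B ⊆ range m)
    (hAB : Disjoint A B) (hp0 : p i ≠ 0) (hp1 : 1 - p i ≠ 0) :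
    condP p m A B event
      = p i * condP p m (insert i A) B event + (1 - p i) * condP p m A (insert i B) event := by
  unfold condP
  rw [sum_prW_of_subset_of_inter_eq_empty p m hA hB hAB,
    sum_prW_of_subset_of_inter_eq_empty p m (insert_subset him hA) hB
      (disjoint_insert_left.mpr ⟨hiB, hAB⟩),
    sum_prW_of_subset_of_inter_eq_empty p m hA (insert_subset him hB)
      (disjoint_insert_right.mpr ⟨hiA, hAB⟩),
    prod_insert hiA, prod_insert hiB, sum_ite_prW_split p m i A B event, add_div]
  congr 1
  · rw [mul_assoc, mul_div_assoc', mul_div_mul_left _ _ hp0]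
  · rw [mul_left_comm, mul_div_assoc', mul_div_mul_left _ _ hp1]

end condP

theorem stmt17_general {V : Type*} [Fintype V] (src tgt : ℕ → V) (p : ℕ → ℝ) (m : ℕ)
    (hp : ∀ e ∈ Finset.range m, 0 < p e ∧ p e < 1)
    (S : Finset V) (i : ℕ) (hi : i < m) (A : Finset ℕ) (hA : A ⊆ Finset.range i)
    (u : V) (C : Set V)
    (huW : u ∈ front src tgt m i)
    (huS : ¬ SReach src tgt A S u)
    (hC : ∀ x, x ∈ C ↔ x ∈ front src tgt m i ∧ ¬ SReach src tgt A S x ∧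
      Reach src tgt A u x ∧ Reach src tgt A x u) :
    condP p m A (Finset.range i \ A) (fun X => ∃ x ∈ C, SReach src tgt X S x)
      = p i * condP p m (insert i A) (Finset.range (i + 1) \ insert i A)
            (fun X => SReach src tgt X S u)
        + (1 - p i) * condP p m A (Finset.range (i + 1) \ A)
            (fun X => SReach src tgt X S u) := by
  have hiA : i ∉ A := fun h => (mem_range.mp (hA h)).false
  have him : i ∈ range m := mem_range.mpr hi
  have hrange : range i ⊆ range m := range_subset_range.mpr hi.le
  have hC_iff : ∀ X, A ⊆ X → ((∃ x ∈ C, SReach src tgt X S x) ↔ SReach src tgt X S u) := by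
    refine fun X hAX => ⟨fun ⟨x, hxC, s, hs, hsx⟩ => ?_, fun hu => ?_⟩
    · exact ⟨s, hs, hsx.trans (reach_mono hAX ((hC x).mp hxC).2.2.2)⟩
    · exact ⟨u, (hC u).mpr ⟨huW, huS, .refl, .refl⟩, hu⟩
  obtain ⟨hp0, hp1⟩ := hp i him
  rw [range_add_one, insert_sdiff_insert, sdiff_insert_of_notMem notMem_range_self,
    insert_sdiff_of_notMem _ hiA, condP_congr p m hC_iff]
  exact condP_eq_add_condP_insert p m _ him hiA (by simp) (hA.trans hrange)
    (sdiff_subset.trans hrange) disjoint_sdiff hp0.ne' (sub_ne_zero.mpr hp1.ne')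

/-- Conditional probability decomposition over a strongly connected component: if `C` is
the SCC of `G_i(Ψ_i(A))` containing `u`, and `u` remains a frontier vertex at level
`i+1`, then the conditional probability that `S` reaches `C` decomposes by the status of
the edge `e_i` (the successive components being those of `u`, with the convention that
the probability is `1` when `u` becomes reachable from `S`). -/
theorem stmt17 {V : Type*} [Fintype V] (src tgt : ℕ → V) (p : ℕ → ℝ) (m : ℕ)
    (hp : ∀ e ∈ Finset.range m, 0 < p e ∧ p e < 1)
    (S : Finset V) (i : ℕ) (hi : i < m) (A : Finset ℕ) (hA : A ⊆ Finset.range i)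
    (u : V) (C : Set V)
    (huW : u ∈ front src tgt m i) (huW1 : u ∈ front src tgt m (i + 1))
    (huS : ¬ SReach src tgt A S u)
    (hC : ∀ x, x ∈ C ↔ x ∈ front src tgt m i ∧ ¬ SReach src tgt A S x ∧
      Reach src tgt A u x ∧ Reach src tgt A x u) :
    condP p m A (Finset.range i \ A) (fun X => ∃ x ∈ C, SReach src tgt X S x)
      = p i * condP p m (insert i A) (Finset.range (i + 1) \ insert i A)
            (fun X => SReach src tgt X S u)
        + (1 - p i) * condP p m A (Finset.range (i + 1) \ A)
            (fun X => SReach src tgt X S u) :=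
  stmt17_general src tgt p m hp S i hi A hA u C huW huS hC
end
end
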